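/- Fix an integer k ≥ 1 and α ∈ (−1/k, −1/(k+1)), and set p = p(n) = n^α (real power). Then lim_{n→∞} Var_{μ_{n,p}}[ (−1)^k · χ_n − f_{n,k} ] / Var_{μ_{n,p}}[f_{n,k}] = 0. -/

import Mathlib

/-!
Write `(-1)^k χ_n - f_{n,k} = Σ_{j ≠ k} ± f_{n,j}`; by Minkowski, `√Var` of it is at most
`Σ_{j ≠ k} √Var f_{n,j}`. Grouping pairs of `(j+1)`-sets by the size `t` of their intersection
gives `Var f_{n,j} = Σ_t C(n,j+1) C(j+1,t) C(n-j-1,j+1-t) (p^(2C(j+1,2)-C(t,2)) - p^(2C(j+1,2)))`,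
so for `p = n^α` the variance is, up to factors depending only on `j`, of order `n ^ E_j` with
`E_j = max_{2 ≤ t ≤ j+1} covExponent α j t`. The exponent is convex in `t`, so the maximum sits
at `t = 2` or `t = j + 1`; for `α ∈ (-1/k, -1/(k+1))` this gives `E_j ≤ E_k - δ |j - k|` with a
fixed `δ > 0`. Thus `√Var f_{n,j} ≤ 2^(j+1) n^(-δ|j-k|/2) n^(E_k/2)`, and the sum over `j ≠ k` is
a geometric series of size `O(n^(-δ/2)) √Var f_{n,k}`.
-/

open Finset MeasureTheory Filter Real

noncomputable section

open scoped Classical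

/-- The edge set `E_n`: unordered pairs of distinct elements of `[n]`. -/
abbrev Edge (n : ℕ) := {e : Sym2 (Fin n) // ¬ e.IsDiag}

/-- An edge configuration on `[n]`. -/
abbrev Config (n : ℕ) := Edge n → Bool

/-- Bernoulli(p) weight of a state. -/
def bern (p : ℝ) (b : Bool) : ℝ := if b then p else 1 - p

/-- Weight of a configuration under the static Erdős–Rényi measure `μ_{n,p}`. -/
def staticWeight (n : ℕ) (p : ℝ) (ω : Config n) : ℝ := ∏ e : Edge n, bern p (ω e)

/-- Expectation under the static Erdős–Rényi measure `μ_{n,p}`. -/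
def staticExp (n : ℕ) (p : ℝ) (f : Config n → ℝ) : ℝ :=
  ∑ ω : Config n, staticWeight n p ω * f ω

/-- Variance under the static Erdős–Rényi measure `μ_{n,p}`. -/
def staticVar (n : ℕ) (p : ℝ) (f : Config n → ℝ) : ℝ :=
  staticExp n p (fun ω => (f ω - staticExp n p f) ^ 2)

/-- `A` is a clique of the graph `G(ω)`: every pair of distinct elements of `A`
is an edge of `G(ω)`. -/
def IsCliqueOf {n : ℕ} (A : Finset (Fin n)) (ω : Config n) : Prop :=
  ∀ e : Edge n, e.1 ∈ A.sym2 → ω e = true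

/-- The clique count `f_{n,j}(ω)`: the number of `(j+1)`-element subsets of `[n]`
all of whose pairs are edges of `G(ω)`. -/
def cliqueCount (n j : ℕ) (ω : Config n) : ℕ :=
  ((Finset.powersetCard (j + 1) (Finset.univ : Finset (Fin n))).filter
    (fun A => IsCliqueOf A ω)).card

/-- Real-valued clique count. -/
def cliqueCountR (n j : ℕ) (ω : Config n) : ℝ := (cliqueCount n j ω : ℝ)

/-- The Euler characteristic `χ_n(ω) = Σ_{j=0}^{n-1} (-1)^j f_{n,j}(ω)`. -/
def eulerChar (n : ℕ) (ω : Config n) : ℝ :=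
  ∑ j ∈ Finset.range n, (-1 : ℝ) ^ j * cliqueCountR n j ω

/-- Transition probability of the stationary on/off Markov chain with invariant
law Bernoulli(p) over a time increment `s`. -/
def transP (lam p s : ℝ) (b b' : Bool) : ℝ :=
  if b then (if b' then p + (1 - p) * Real.exp (-lam * s)
             else (1 - p) * (1 - Real.exp (-lam * s)))
  else (if b' then p * (1 - Real.exp (-lam * s))
        else (1 - p) + p * Real.exp (-lam * s))

/-- Weight of a trajectory of the stationary on/off Markov chain observed at the
times `t 0 ≤ t 1 ≤ …`. -/
def pathWeight (lam p : ℝ) {m : ℕ} (t : Fin m → ℝ) (b : Fin m → Bool) : ℝ :=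
  ∏ i : Fin m,
    if (i : ℕ) = 0 then bern p (b i)
    else transP lam p (t i - t ⟨(i : ℕ) - 1, lt_of_le_of_lt (Nat.sub_le _ _) i.isLt⟩)
      (b ⟨(i : ℕ) - 1, lt_of_le_of_lt (Nat.sub_le _ _) i.isLt⟩) (b i)

/-- Weight of an `m`-tuple of edge configurations under the `m`-time dynamic
Erdős–Rényi measure `μ_{n,p}^{(t 0, …, t (m-1))}`. -/
def dynWeight (lam p : ℝ) (n : ℕ) {m : ℕ} (t : Fin m → ℝ) (ω : Fin m → Config n) : ℝ :=
  ∏ e : Edge n, pathWeight lam p t (fun i => ω i e)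

/-- Expectation under the `m`-time dynamic Erdős–Rényi measure. -/
def dynExp (lam p : ℝ) (n : ℕ) {m : ℕ} (t : Fin m → ℝ) (F : (Fin m → Config n) → ℝ) : ℝ :=
  ∑ ω : Fin m → Config n, dynWeight lam p n t ω * F ω

/-- The normalized clique count `f̄_{n,k}` (under the measure `μ_{n,p}`). -/
def fbar (n k : ℕ) (p : ℝ) (ω : Config n) : ℝ :=
  (cliqueCountR n k ω - staticExp n p (cliqueCountR n k)) /
    Real.sqrt (staticVar n p (cliqueCountR n k))

/-- The normalized Euler characteristic `χ̄_n` (under the measure `μ_{n,p}`). -/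
def chibar (n : ℕ) (p : ℝ) (ω : Config n) : ℝ :=
  (eulerChar n ω - staticExp n p (eulerChar n)) /
    Real.sqrt (staticVar n p (eulerChar n))

/-- The clique indicator `1_A(ω)` as a real number. -/
def cliqueInd {n : ℕ} (A : Finset (Fin n)) (ω : Config n) : ℝ :=
  if IsCliqueOf A ω then 1 else 0

/-- A quadruple of subsets has an independent set if one of them shares at most
one vertex with each of the others. -/
def HasIndepSet {n : ℕ} (A : Fin 4 → Finset (Fin n)) : Prop :=
  ∃ q : Fin 4, ∀ r : Fin 4, r ≠ q → ((A q) ∩ (A r)).card ≤ 1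

/-- The quantity `g(h; Ā)` built from clique indicators at three times. -/
def gQuad {n : ℕ} (A : Fin 4 → Finset (Fin n)) (ω : Fin 3 → Config n) : ℝ :=
  (cliqueInd (A 0) (ω 2) - cliqueInd (A 0) (ω 1)) *
  (cliqueInd (A 1) (ω 2) - cliqueInd (A 1) (ω 1)) *
  (cliqueInd (A 2) (ω 1) - cliqueInd (A 2) (ω 0)) *
  (cliqueInd (A 3) (ω 1) - cliqueInd (A 3) (ω 0))

/-- `ver(Ā)`: inclusion–exclusion count of vertices. -/
def verA {n : ℕ} (A : Fin 4 → Finset (Fin n)) : ℤ :=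
  (∑ q : Fin 4, ((A q).card : ℤ))
  - (∑ q : Fin 4, ∑ r : Fin 4, if q < r then (((A q) ∩ (A r)).card : ℤ) else 0)
  + (∑ q : Fin 4, ∑ r : Fin 4, ∑ s : Fin 4,
      if q < r ∧ r < s then (((A q) ∩ (A r) ∩ (A s)).card : ℤ) else 0)
  - ((A 0 ∩ A 1 ∩ A 2 ∩ A 3).card : ℤ)

/-- `pair(Ā)`: inclusion–exclusion count of potential edges. -/
def pairA {n : ℕ} (A : Fin 4 → Finset (Fin n)) : ℤ :=
  (∑ q : Fin 4, (Nat.choose (A q).card 2 : ℤ))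
  - (∑ q : Fin 4, ∑ r : Fin 4, if q < r then (Nat.choose ((A q) ∩ (A r)).card 2 : ℤ) else 0)
  + (∑ q : Fin 4, ∑ r : Fin 4, ∑ s : Fin 4,
      if q < r ∧ r < s then (Nat.choose ((A q) ∩ (A r) ∩ (A s)).card 2 : ℤ) else 0)
  - (Nat.choose (A 0 ∩ A 1 ∩ A 2 ∩ A 3).card 2 : ℤ)

open scoped Nat

section Binomial

lemma pow_le_two_pow_mul_factorial_mul_choose {n m : ℕ} (h : 2 * m ≤ n) :
    n ^ m ≤ 2 ^ m * m ! * n.choose m :=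
  calc n ^ m ≤ (2 * (n + 1 - m)) ^ m := Nat.pow_le_pow_left (by omega) m
    _ = 2 ^ m * (n + 1 - m) ^ m := mul_pow ..
    _ ≤ 2 ^ m * (m ! * n.choose m) := by
      rw [← Nat.descFactorial_eq_factorial_mul_choose]
      exact Nat.mul_le_mul_left _ (Nat.pow_sub_le_descFactorial n m)
    _ = 2 ^ m * m ! * n.choose m := (mul_assoc ..).symm

lemma choose_mul_choose_mul_choose_le (n : ℕ) {m t : ℕ} (ht : t ≤ m) :
    n.choose m * m.choose t * (n - m).choose (m - t) ≤ 2 ^ m * n ^ (2 * m - t) :=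
  calc n.choose m * m.choose t * (n - m).choose (m - t)
      ≤ n ^ m * 2 ^ m * n ^ (m - t) := by
        gcongr
        · exact Nat.choose_le_pow n m
        · exact Nat.choose_le_two_pow m t
        · exact (Nat.choose_le_pow _ _).trans (Nat.pow_le_pow_left (Nat.sub_le n m) _)
    _ = 2 ^ m * n ^ (2 * m - t) := by
      rw [mul_comm (n ^ m), mul_assoc, ← pow_add]
      congr 2
      omega

lemma pow_le_choose_mul_choose_mul_choose {n m t : ℕ} (hn : 3 * m ≤ n) (ht : t ≤ m) :
    n ^ (2 * m - t) ≤ 8 ^ m * m ! ^ 2 * (n.choose m * m.choose t * (n - m).choose (m - t)) := by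
  have h1 := pow_le_two_pow_mul_factorial_mul_choose (n := n) (m := m) (by omega)
  have h2 := pow_le_two_pow_mul_factorial_mul_choose (n := n - m) (m := m - t) (by omega)
  have h3 : n ^ (m - t) ≤ 2 ^ (m - t) * (n - m) ^ (m - t) := by
    rw [← mul_pow]
    exact Nat.pow_le_pow_left (by omega) _
  have h4 : 2 ^ m * 4 ^ (m - t) ≤ 8 ^ m := by
    calc 2 ^ m * 4 ^ (m - t) ≤ 2 ^ m * 4 ^ m := by gcongr <;> omega
      _ = 8 ^ m := by rw [← mul_pow]; norm_num
  have h5 : (m - t)! ≤ m ! := Nat.factorial_le (Nat.sub_le m t)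
  calc n ^ (2 * m - t) = n ^ m * n ^ (m - t) := by rw [← pow_add]; congr 1; omega
    _ ≤ (2 ^ m * m ! * n.choose m) * (2 ^ (m - t) * (2 ^ (m - t) * (m - t)! *
        (n - m).choose (m - t))) := by gcongr; exact h3.trans (by gcongr)
    _ = (2 ^ m * 4 ^ (m - t)) * (m ! * (m - t)!) * (n.choose m * (n - m).choose (m - t)) := by
      rw [show (4 : ℕ) = 2 * 2 from rfl, mul_pow]; ring
    _ ≤ 8 ^ m * m ! ^ 2 * (n.choose m * (n - m).choose (m - t)) := by
      rw [sq]; gcongr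
    _ ≤ 8 ^ m * m ! ^ 2 * (n.choose m * m.choose t * (n - m).choose (m - t)) := by
      rw [mul_right_comm (n.choose m)]
      exact Nat.mul_le_mul_left _ (Nat.le_mul_of_pos_right _ (Nat.choose_pos ht))

end Binomial

section Counting

lemma card_powersetCard_filter_card_inter_eq {α : Type*} [Fintype α] [DecidableEq α]
    {A : Finset α} {t : ℕ} (ht : t ≤ #A) :
    #{B ∈ powersetCard #A univ | #(A ∩ B) = t} =
      (#A).choose t * (Fintype.card α - #A).choose (#A - t) := by
  rw [← card_compl, ← card_powersetCard, ← card_powersetCard, ← card_product]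
  refine card_nbij' (fun B => (A ∩ B, B \ A)) (fun TC => TC.1 ∪ TC.2) ?_ ?_ ?_ ?_
  · intro B hB
    simp only [coe_filter, mem_powersetCard_univ, Set.mem_ofPred_eq] at hB
    simp only [coe_product, Set.mem_prod, mem_coe, mem_powersetCard, inter_subset_left, hB.2,
      card_sdiff, hB.1, true_and]
    exact ⟨fun x hx => mem_compl.mpr (mem_sdiff.mp hx).2, trivial⟩
  · rintro ⟨T, C⟩ hTC
    simp only [coe_product, Set.mem_prod, mem_coe, mem_powersetCard] at hTC
    obtain ⟨⟨hTA, hT⟩, hCA, hC⟩ := hTC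
    have hAC : Disjoint A C := disjoint_right.mpr fun x hx => mem_compl.mp (hCA hx)
    simp only [coe_filter, mem_powersetCard_univ, Set.mem_ofPred_eq,
      card_union_of_disjoint (disjoint_of_subset_left hTA hAC), hT, hC,
      inter_union_distrib_left, inter_eq_right.mpr hTA,
      disjoint_iff_inter_eq_empty.mp hAC, union_empty]
    exact ⟨by omega, trivial⟩
  · intro B _
    change A ∩ B ∪ B \ A = B
    rw [inter_comm, union_comm, sdiff_union_inter]
  · rintro ⟨T, C⟩ hTC
    simp only [coe_product, Set.mem_prod, mem_coe, mem_powersetCard] at hTC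
    obtain ⟨⟨hTA, -⟩, hCA, -⟩ := hTC
    have hAC : Disjoint A C := disjoint_right.mpr fun x hx => mem_compl.mp (hCA hx)
    change (A ∩ (T ∪ C), (T ∪ C) \ A) = (T, C)
    rw [inter_union_distrib_left, inter_eq_right.mpr hTA, disjoint_iff_inter_eq_empty.mp hAC,
      union_empty, union_sdiff_distrib, sdiff_eq_empty_iff_subset.mpr hTA, empty_union,
      sdiff_eq_self_of_disjoint hAC.symm]

lemma sum_powersetCard_comp_card_inter {α M : Type*} [Fintype α] [DecidableEq α]
    [AddCommMonoid M] (A : Finset α) (g : ℕ → M) :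
    ∑ B ∈ powersetCard #A univ, g #(A ∩ B) =
      ∑ t ∈ range (#A + 1), ((#A).choose t * (Fintype.card α - #A).choose (#A - t)) • g t := by
  rw [← sum_fiberwise_of_maps_to (g := fun B => #(A ∩ B)) (t := range (#A + 1))
    fun B _ => mem_range.mpr (Nat.lt_succ_of_le (card_le_card inter_subset_left))]
  refine sum_congr rfl fun t ht => ?_
  rw [sum_congr rfl fun B hB => by rw [(mem_filter.mp hB).2], sum_const,
    card_powersetCard_filter_card_inter_eq (Nat.lt_succ_iff.mp (mem_range.mp ht))]

end Counting

section Geometric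

lemma sum_pow_le_of_injOn {ι : Type*} {s : Finset ι} {d : ι → ℕ} (hd : Set.InjOn d s)
    (hpos : ∀ i ∈ s, 1 ≤ d i) {u : ℝ} (hu0 : 0 ≤ u) (hu1 : u < 1) :
    ∑ i ∈ s, u ^ d i ≤ u / (1 - u) := by
  rw [← sum_image hd]
  calc ∑ m ∈ s.image d, u ^ m ≤ ∑ m ∈ Ico 1 ((s.image d).sup id + 1), u ^ m := by
        refine sum_le_sum_of_subset_of_nonneg (fun m hm => ?_) fun m _ _ => pow_nonneg hu0 m
        obtain ⟨i, hi, rfl⟩ := mem_image.mp hm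
        exact mem_Ico.mpr ⟨hpos i hi, Nat.lt_succ_of_le (le_sup (f := id) hm)⟩
    _ ≤ u / (1 - u) := by simpa using geom_sum_Ico_le_of_lt_one (m := 1) hu0 hu1

lemma sum_pow_dist_le {s : Finset ℕ} {k : ℕ} (hk : k ∉ s) {u : ℝ} (hu0 : 0 ≤ u) (hu1 : u < 1) :
    ∑ j ∈ s, u ^ j.dist k ≤ 2 * (u / (1 - u)) := by
  have hne : ∀ j ∈ s, j ≠ k := fun j hj h => hk (h ▸ hj)
  rw [← sum_filter_add_sum_filter_not s (· < k), two_mul]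
  gcongr <;>
  · refine sum_pow_le_of_injOn (fun i hi j hj h => ?_) (fun j hj => ?_) hu0 hu1 <;>
      simp only [coe_filter, Set.mem_ofPred_eq, mem_filter, Nat.dist] at *
    · have := hne i hi.1
      have := hne j hj.1
      omega
    · have := hne j hj.1
      omega

end Geometric

section Expectation

variable {n : ℕ} {p : ℝ}

lemma staticExp_prod (g : Edge n → Bool → ℝ) :
    staticExp n p (fun ω => ∏ e, g e (ω e)) = ∏ e, ∑ b, bern p b * g e b := by
  simp only [staticExp, staticWeight, ← prod_mul_distrib]
  exact (Fintype.prod_sum fun e b => bern p b * g e b).symm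

lemma sum_staticWeight : ∑ ω, staticWeight n p ω = 1 := by
  simpa [staticExp, bern] using staticExp_prod (n := n) (p := p) fun _ _ => 1

lemma staticWeight_nonneg (hp0 : 0 ≤ p) (hp1 : p ≤ 1) (ω : Config n) :
    0 ≤ staticWeight n p ω :=
  prod_nonneg fun e _ => by unfold bern; split <;> linarith

lemma staticExp_const (c : ℝ) : staticExp n p (fun _ => c) = c := by
  rw [staticExp, ← sum_mul, sum_staticWeight, one_mul]

lemma staticExp_add (f g : Config n → ℝ) :
    staticExp n p (fun ω => f ω + g ω) = staticExp n p f + staticExp n p g := by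
  simp only [staticExp, mul_add, sum_add_distrib]

lemma staticExp_const_mul (c : ℝ) (f : Config n → ℝ) :
    staticExp n p (fun ω => c * f ω) = c * staticExp n p f := by
  simp only [staticExp, mul_sum, mul_left_comm]

lemma staticExp_sum {ι : Type*} (s : Finset ι) (f : ι → Config n → ℝ) :
    staticExp n p (fun ω => ∑ i ∈ s, f i ω) = ∑ i ∈ s, staticExp n p (f i) := by
  simp only [staticExp, mul_sum]
  exact sum_comm

lemma staticExp_nonneg (hp0 : 0 ≤ p) (hp1 : p ≤ 1) {f : Config n → ℝ} (hf : ∀ ω, 0 ≤ f ω) :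
    0 ≤ staticExp n p f :=
  sum_nonneg fun ω _ => mul_nonneg (staticWeight_nonneg hp0 hp1 ω) (hf ω)

lemma staticVar_nonneg (hp0 : 0 ≤ p) (hp1 : p ≤ 1) (f : Config n → ℝ) :
    0 ≤ staticVar n p f :=
  staticExp_nonneg hp0 hp1 fun _ => sq_nonneg _

def staticCov (n : ℕ) (p : ℝ) (f g : Config n → ℝ) : ℝ :=
  staticExp n p (fun ω => (f ω - staticExp n p f) * (g ω - staticExp n p g))

lemma staticCov_eq (f g : Config n → ℝ) :
    staticCov n p f g = staticExp n p (fun ω => f ω * g ω) - staticExp n p f * staticExp n p g := by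
  have h : ∀ ω, (f ω - staticExp n p f) * (g ω - staticExp n p g) = f ω * g ω +
      ((-staticExp n p g) * f ω + ((-staticExp n p f) * g ω + staticExp n p f * staticExp n p g)) :=
    fun ω => by ring
  simp only [staticCov, h, staticExp_add, staticExp_const_mul, staticExp_const]
  ring

lemma staticVar_sum {ι : Type*} (s : Finset ι) (f : ι → Config n → ℝ) :
    staticVar n p (fun ω => ∑ i ∈ s, f i ω) = ∑ i ∈ s, ∑ j ∈ s, staticCov n p (f i) (f j) := by
  simp only [staticVar, staticCov, staticExp_sum, ← sum_sub_distrib, sq, sum_mul_sum]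

/-- Realises `√Var` as a Euclidean norm, so that Minkowski's inequality for `√Var` is the
triangle inequality. -/
def staticCentered (n : ℕ) (p : ℝ) : (Config n → ℝ) →ₗ[ℝ] EuclideanSpace ℝ (Config n) where
  toFun f := WithLp.toLp 2 fun ω => √(staticWeight n p ω) * (f ω - staticExp n p f)
  map_add' f g := by
    ext ω
    simp only [Pi.add_apply, PiLp.add_apply]
    rw [show staticExp n p (f + g) = _ from staticExp_add f g]
    ring
  map_smul' c f := by
    ext ω
    simp only [Pi.smul_apply, smul_eq_mul, RingHom.id_apply, PiLp.smul_apply]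
    rw [show staticExp n p (c • f) = _ from staticExp_const_mul c f]
    ring

lemma sqrt_staticVar_eq_norm_staticCentered (hp0 : 0 ≤ p) (hp1 : p ≤ 1) (f : Config n → ℝ) :
    √(staticVar n p f) = ‖staticCentered n p f‖ := by
  rw [EuclideanSpace.norm_eq]
  congr 1
  refine sum_congr rfl fun ω _ => ?_
  simp [staticCentered, mul_pow, Real.sq_sqrt (staticWeight_nonneg hp0 hp1 ω)]

lemma sqrt_staticVar_sum_le (hp0 : 0 ≤ p) (hp1 : p ≤ 1) {ι : Type*} (s : Finset ι) (c : ι → ℝ)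
    (f : ι → Config n → ℝ) :
    √(staticVar n p (fun ω => ∑ i ∈ s, c i * f i ω)) ≤ ∑ i ∈ s, |c i| * √(staticVar n p (f i)) := by
  have : (fun ω => ∑ i ∈ s, c i * f i ω) = ∑ i ∈ s, c i • f i := by ext; simp
  simp only [sqrt_staticVar_eq_norm_staticCentered hp0 hp1, this, map_sum, map_smul]
  refine (norm_sum_le _ _).trans_eq (sum_congr rfl fun i _ => ?_)
  rw [norm_smul, Real.norm_eq_abs]

end Expectation

section Cliques

variable {n : ℕ} {p : ℝ}

def edgesOf (A : Finset (Fin n)) : Finset (Edge n) :=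
  A.sym2.subtype fun e => ¬ e.IsDiag

lemma card_edgesOf (A : Finset (Fin n)) : #(edgesOf A) = (#A).choose 2 := by
  rw [edgesOf, card_subtype, ← Sym2.card_image_offDiag]
  congr 1
  ext e
  induction e with
  | _ a b => simp only [mem_filter, mk_mem_sym2_iff, Sym2.mk_isDiag_iff,
      mem_image, mem_offDiag, Prod.exists, Function.uncurry_apply_pair]; aesop

lemma edgesOf_inter (A B : Finset (Fin n)) : edgesOf (A ∩ B) = edgesOf A ∩ edgesOf B := by
  ext e
  simp [edgesOf, mem_sym2_iff, forall_and]

lemma card_edgesOf_union (A B : Finset (Fin n)) :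
    #(edgesOf A ∪ edgesOf B) = (#A).choose 2 + (#B).choose 2 - (#(A ∩ B)).choose 2 := by
  have := card_union_add_card_inter (edgesOf A) (edgesOf B)
  rw [← edgesOf_inter, card_edgesOf, card_edgesOf, card_edgesOf] at this
  omega

lemma cliqueInd_eq_ite (A : Finset (Fin n)) :
    cliqueInd A = fun ω => if ∀ e ∈ edgesOf A, ω e = true then 1 else 0 := by
  ext ω
  simp [cliqueInd, IsCliqueOf, edgesOf]

lemma staticExp_ite_forall (S : Finset (Edge n)) :
    staticExp n p (fun ω => if ∀ e ∈ S, ω e = true then 1 else 0) = p ^ #S := by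
  have h := staticExp_prod (n := n) (p := p) fun e b => if e ∈ S then (if b then 1 else 0) else 1
  simp only [prod_ite_mem, univ_inter, prod_boole, Fintype.sum_bool, bern] at h
  simpa [apply_ite, prod_ite_mem] using h

lemma staticCov_cliqueInd (A B : Finset (Fin n)) :
    staticCov n p (cliqueInd A) (cliqueInd B) =
      p ^ ((#A).choose 2 + (#B).choose 2 - (#(A ∩ B)).choose 2) -
        p ^ ((#A).choose 2 + (#B).choose 2) := by
  have hmul : (fun ω => cliqueInd A ω * cliqueInd B ω) =
      fun ω => if ∀ e ∈ edgesOf A ∪ edgesOf B, ω e = true then 1 else 0 := by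
    simp only [cliqueInd_eq_ite, ite_zero_mul_ite_zero, mul_one, forall_mem_union]
  rw [staticCov_eq, hmul, cliqueInd_eq_ite A, cliqueInd_eq_ite B, staticExp_ite_forall,
    staticExp_ite_forall, staticExp_ite_forall, card_edgesOf_union, card_edgesOf, card_edgesOf,
    pow_add]

lemma cliqueCountR_eq_sum (n j : ℕ) :
    cliqueCountR n j = fun ω => ∑ A ∈ powersetCard (j + 1) univ, cliqueInd A ω := by
  ext ω
  rw [cliqueCountR, cliqueCount, card_filter]
  push_cast
  rfl

end Cliques

section Variance

variable {n : ℕ} {p : ℝ}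

/-- The contribution to `Var f_{n,j}` of the pairs of `(j+1)`-sets sharing exactly `t` vertices. -/
def cliquePairTerm (n j t : ℕ) (p : ℝ) : ℝ :=
  n.choose (j + 1) * (j + 1).choose t * (n - (j + 1)).choose (j + 1 - t) *
    (p ^ (2 * (j + 1).choose 2 - t.choose 2) - p ^ (2 * (j + 1).choose 2))

theorem staticVar_cliqueCountR (j : ℕ) :
    staticVar n p (cliqueCountR n j) = ∑ t ∈ range (j + 2), cliquePairTerm n j t p := by
  set S := powersetCard (j + 1) (univ : Finset (Fin n))
  set g : ℕ → ℝ := fun t => p ^ (2 * (j + 1).choose 2 - t.choose 2) - p ^ (2 * (j + 1).choose 2)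
  have hrow : ∀ A ∈ S, ∑ B ∈ S, staticCov n p (cliqueInd A) (cliqueInd B) =
      ∑ t ∈ range (j + 2), ((j + 1).choose t * (n - (j + 1)).choose (j + 1 - t)) • g t := by
    intro A hA
    rw [mem_powersetCard_univ] at hA
    have h := sum_powersetCard_comp_card_inter A g
    rw [hA, Fintype.card_fin] at h
    rw [← h]
    refine sum_congr rfl fun B hB => ?_
    rw [staticCov_cliqueInd, hA, mem_powersetCard_univ.mp hB, ← two_mul]
  rw [cliqueCountR_eq_sum, staticVar_sum, sum_congr rfl hrow, sum_const, card_powersetCard,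
    card_univ, Fintype.card_fin, nsmul_eq_mul, mul_sum]
  refine sum_congr rfl fun t _ => ?_
  simp only [cliquePairTerm, g, nsmul_eq_mul, Nat.cast_mul, mul_assoc]

lemma cliquePairTerm_nonneg (hp0 : 0 ≤ p) (hp1 : p ≤ 1) (j t : ℕ) :
    0 ≤ cliquePairTerm n j t p :=
  mul_nonneg (by positivity) (sub_nonneg.mpr (pow_le_pow_of_le_one hp0 hp1 (Nat.sub_le _ _)))

lemma cliquePairTerm_of_lt_two (j : ℕ) {t : ℕ} (ht : t < 2) : cliquePairTerm n j t p = 0 := by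
  rw [cliquePairTerm, Nat.choose_eq_zero_of_lt ht, Nat.sub_zero, sub_self, mul_zero]

end Variance

section Exponent

/-- For `2 ≤ t`, `cliquePairTerm n j t (n ^ α)` is of order `n ^ covExponent α j t`. -/
def covExponent (α : ℝ) (j : ℕ) (t : ℝ) : ℝ :=
  2 * ((j : ℝ) + 1) - t + α * (((j : ℝ) + 1) * j - t * (t - 1) / 2)

lemma pow_mul_rpow_pow_eq_rpow_covExponent {n : ℕ} (hn : 0 < n) (α : ℝ) {j t : ℕ}
    (ht : t ≤ j + 1) :
    (n : ℝ) ^ (2 * (j + 1) - t) * ((n : ℝ) ^ α) ^ (2 * (j + 1).choose 2 - t.choose 2) =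
      (n : ℝ) ^ covExponent α j t := by
  have hn' : (0 : ℝ) < n := by exact_mod_cast hn
  have hc : t.choose 2 ≤ 2 * (j + 1).choose 2 :=
    (Nat.choose_le_choose 2 ht).trans (Nat.le_mul_of_pos_left _ two_pos)
  rw [← Real.rpow_natCast, ← Real.rpow_natCast, ← Real.rpow_mul hn'.le, ← Real.rpow_add hn',
    Nat.cast_sub hc, Nat.cast_sub (by omega)]
  push_cast [Nat.cast_choose_two]
  congr 1
  unfold covExponent
  ring

lemma convexOn_covExponent {α : ℝ} (hα : α ≤ 0) (j : ℕ) :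
    ConvexOn ℝ (Set.Ici 0) (covExponent α j) :=
  ((((convexOn_pow 2).smul (c := -α / 2) (by linarith)).add
    ((LinearMap.lsmul ℝ ℝ (α / 2 - 1)).convexOn (convex_Ici 0))).add_const
    (2 * ((j : ℝ) + 1) + α * (((j : ℝ) + 1) * j))).congr fun s _ => by
      simp only [covExponent, Pi.add_apply, smul_eq_mul, LinearMap.lsmul_apply]
      ring

/-- Convexity in `t` reduces the claim to `t = 2` and `t = j + 1`; at both endpoints the
difference from the value at `k` is `(j - k)` times a factor that decreases in `j` and changes
sign between `j = k - 1` and `j = k + 1`. -/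
lemma covExponent_le_sub_mul_dist {k : ℕ} {α δ : ℝ} (hδ : 0 ≤ δ) (hδk : δ ≤ 1 + k * α)
    (hδk1 : δ ≤ -(1 + (k + 1) * α)) {j t : ℕ} (hj : j ≠ k) (ht2 : 2 ≤ t) (htj : t ≤ j + 1) :
    covExponent α j t ≤ max (covExponent α k 2) (covExponent α k (k + 1)) - δ * j.dist k := by
  have hα : α ≤ 0 := by linarith
  have hmax : covExponent α j t ≤ max (covExponent α j 2) (covExponent α j (j + 1)) :=
    (convexOn_covExponent hα j).le_max_of_mem_Icc (by norm_num) (Set.mem_Ici.mpr (by positivity))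
      ⟨by exact_mod_cast ht2, by exact_mod_cast htj⟩
  have hsign : ∀ L : ℝ, (j < k → δ ≤ L) → (k < j → L ≤ -δ) →
      ((j : ℝ) - k) * L ≤ -(δ * j.dist k) := by
    intro L hlt hgt
    rcases Nat.lt_or_gt_of_ne hj with hjk | hjk
    · rw [Nat.dist_eq_sub_of_le hjk.le, Nat.cast_sub hjk.le]
      nlinarith [hlt hjk, (Nat.cast_lt (α := ℝ)).mpr hjk]
    · rw [Nat.dist_eq_sub_of_le_right hjk.le, Nat.cast_sub hjk.le]
      nlinarith [hgt hjk, (Nat.cast_lt (α := ℝ)).mpr hjk]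
  have hlow : j < k → 2 * k * α ≤ α * (j + k + 1) := fun hjk => by
    have : (j : ℝ) + 1 ≤ k := by exact_mod_cast hjk
    nlinarith
  have hhigh : k < j → α * (j + k + 1) ≤ 2 * (k + 1) * α := fun hjk => by
    have : (k : ℝ) + 1 ≤ j := by exact_mod_cast hjk
    nlinarith
  have e2 : covExponent α j 2 = covExponent α k 2 + ((j : ℝ) - k) * (2 + α * (j + k + 1)) := by
    unfold covExponent; ring
  have e1 : covExponent α j (j + 1) =
      covExponent α k (k + 1) + ((j : ℝ) - k) * (1 + α * (j + k + 1) / 2) := by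
    unfold covExponent; ring
  have h2 := hsign (2 + α * (j + k + 1)) (fun h => by linarith [hlow h])
    (fun h => by linarith [hhigh h])
  have h1 := hsign (1 + α * (j + k + 1) / 2) (fun h => by linarith [hlow h])
    (fun h => by linarith [hhigh h])
  calc covExponent α j t ≤ max (covExponent α j 2) (covExponent α j (j + 1)) := hmax
    _ ≤ max (covExponent α k 2 - δ * j.dist k) (covExponent α k (k + 1) - δ * j.dist k) := by
        gcongr <;> linarith
    _ = _ := max_sub_sub_right _ _ _

lemma exists_covExponent_margin {k : ℕ} (hk : 1 ≤ k) {α : ℝ} (hα1 : -(1 / (k : ℝ)) < α)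
    (hα2 : α < -(1 / ((k : ℝ) + 1))) :
    ∃ δ > 0, ∀ j t : ℕ, j ≠ k → 2 ≤ t → t ≤ j + 1 →
      covExponent α j t ≤ max (covExponent α k 2) (covExponent α k (k + 1)) - δ * j.dist k := by
  have hk0 : (0 : ℝ) < k := by exact_mod_cast hk
  have h1 : 0 < 1 + k * α := by
    have := mul_lt_mul_of_pos_left hα1 hk0
    rw [mul_neg, mul_one_div_cancel hk0.ne'] at this
    linarith
  have h2 : 1 + (k + 1) * α < 0 := by
    have := mul_lt_mul_of_pos_left hα2 (by linarith : (0 : ℝ) < k + 1)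
    rw [mul_neg, mul_one_div_cancel (by linarith)] at this
    linarith
  exact ⟨min (1 + k * α) (-(1 + (k + 1) * α)), lt_min h1 (by linarith), fun j t hj =>
    covExponent_le_sub_mul_dist (le_min h1.le (by linarith)) (min_le_left _ _)
      (min_le_right _ _) hj⟩

end Exponent

section RpowBounds

variable {n : ℕ} {α : ℝ}

lemma cliquePairTerm_le_rpow (hn : 0 < n) {j t : ℕ} (ht : t ≤ j + 1) :
    cliquePairTerm n j t ((n : ℝ) ^ α) ≤ 2 ^ (j + 1) * (n : ℝ) ^ covExponent α j t := by
  have hp0 : 0 ≤ (n : ℝ) ^ α := Real.rpow_nonneg n.cast_nonneg α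
  have hC : (n.choose (j + 1) : ℝ) * (j + 1).choose t * (n - (j + 1)).choose (j + 1 - t) ≤
      2 ^ (j + 1) * (n : ℝ) ^ (2 * (j + 1) - t) := by
    exact_mod_cast choose_mul_choose_mul_choose_le n ht
  rw [cliquePairTerm, ← pow_mul_rpow_pow_eq_rpow_covExponent hn α ht, ← mul_assoc]
  calc _ ≤ (n.choose (j + 1) : ℝ) * (j + 1).choose t * (n - (j + 1)).choose (j + 1 - t) *
        ((n : ℝ) ^ α) ^ (2 * (j + 1).choose 2 - t.choose 2) :=
        mul_le_mul_of_nonneg_left (sub_le_self _ (pow_nonneg hp0 _)) (by positivity)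
    _ ≤ _ := mul_le_mul_of_nonneg_right hC (pow_nonneg hp0 _)

lemma one_sub_mul_rpow_le_cliquePairTerm {j : ℕ} (hn : 3 * (j + 1) ≤ n) (hα : α ≤ 0) {t : ℕ}
    (ht2 : 2 ≤ t) (htj : t ≤ j + 1) :
    (1 - (n : ℝ) ^ α) * (n : ℝ) ^ covExponent α j t ≤
      8 ^ (j + 1) * ((j + 1)! : ℝ) ^ 2 * cliquePairTerm n j t ((n : ℝ) ^ α) := by
  set p := (n : ℝ) ^ α
  have hn0 : 0 < n := by omega
  have hp0 : 0 ≤ p := Real.rpow_nonneg (Nat.cast_nonneg n) α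
  have hp1 : p ≤ 1 := Real.rpow_le_one_of_one_le_of_nonpos (by exact_mod_cast hn0) hα
  set a := 2 * (j + 1).choose 2 - t.choose 2
  have hgap : (1 - p) * p ^ a ≤ p ^ a - p ^ (2 * (j + 1).choose 2) := by
    have ha : 2 * (j + 1).choose 2 = a + t.choose 2 :=
      (Nat.sub_add_cancel ((Nat.choose_le_choose 2 htj).trans (by omega))).symm
    rw [ha, pow_add]
    nlinarith [pow_le_pow_of_le_one hp0 hp1 (Nat.choose_pos ht2), pow_nonneg hp0 a]
  have hC : (n : ℝ) ^ (2 * (j + 1) - t) ≤ 8 ^ (j + 1) * ((j + 1)! : ℝ) ^ 2 *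
      ((n.choose (j + 1) : ℝ) * (j + 1).choose t * (n - (j + 1)).choose (j + 1 - t)) := by
    exact_mod_cast pow_le_choose_mul_choose_mul_choose hn htj
  calc (1 - p) * (n : ℝ) ^ covExponent α j t = (n : ℝ) ^ (2 * (j + 1) - t) * ((1 - p) * p ^ a) := by
        rw [← pow_mul_rpow_pow_eq_rpow_covExponent hn0 α htj]; ring
    _ ≤ _ * (p ^ a - p ^ (2 * (j + 1).choose 2)) :=
        mul_le_mul hC hgap (mul_nonneg (by linarith) (pow_nonneg hp0 a)) (by positivity)
    _ = _ := by rw [cliquePairTerm]; ring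

lemma staticVar_cliqueCountR_le_rpow (hn : 0 < n) (j : ℕ) {E : ℝ}
    (hE : ∀ t, 2 ≤ t → t ≤ j + 1 → covExponent α j t ≤ E) :
    staticVar n ((n : ℝ) ^ α) (cliqueCountR n j) ≤ 4 ^ (j + 1) * (n : ℝ) ^ E := by
  have hterm : ∀ t ∈ range (j + 2),
      cliquePairTerm n j t ((n : ℝ) ^ α) ≤ 2 ^ (j + 1) * (n : ℝ) ^ E := by
    intro t ht
    rcases lt_or_ge t 2 with ht2 | ht2
    · rw [cliquePairTerm_of_lt_two j ht2]
      positivity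
    have htj : t ≤ j + 1 := Nat.lt_succ_iff.mp (mem_range.mp ht)
    refine (cliquePairTerm_le_rpow hn htj).trans ?_
    gcongr
    exacts [Nat.one_le_cast.mpr hn, hE t ht2 htj]
  have hj : ((j + 2 : ℕ) : ℝ) * 2 ^ (j + 1) ≤ 4 ^ (j + 1) := by
    rw [show (4 : ℝ) ^ (j + 1) = 2 ^ (j + 1) * 2 ^ (j + 1) by rw [← mul_pow]; norm_num]
    gcongr
    exact_mod_cast Nat.lt_two_pow_self
  calc staticVar n ((n : ℝ) ^ α) (cliqueCountR n j)
      ≤ ((j + 2 : ℕ) : ℝ) * (2 ^ (j + 1) * (n : ℝ) ^ E) := by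
        rw [staticVar_cliqueCountR]
        simpa using sum_le_card_nsmul _ _ _ hterm
    _ ≤ 4 ^ (j + 1) * (n : ℝ) ^ E := by
        rw [← mul_assoc]
        gcongr

lemma one_sub_mul_rpow_le_staticVar {j : ℕ} (hn : 3 * (j + 1) ≤ n) (hα : α ≤ 0) {t : ℕ}
    (ht2 : 2 ≤ t) (htj : t ≤ j + 1) :
    (1 - (n : ℝ) ^ α) * (n : ℝ) ^ covExponent α j t ≤
      8 ^ (j + 1) * ((j + 1)! : ℝ) ^ 2 * staticVar n ((n : ℝ) ^ α) (cliqueCountR n j) := by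
  have hp0 : 0 ≤ (n : ℝ) ^ α := Real.rpow_nonneg n.cast_nonneg α
  have hp1 : (n : ℝ) ^ α ≤ 1 :=
    Real.rpow_le_one_of_one_le_of_nonpos (Nat.one_le_cast.mpr (by omega)) hα
  refine (one_sub_mul_rpow_le_cliquePairTerm hn hα ht2 htj).trans ?_
  rw [staticVar_cliqueCountR]
  gcongr
  exact single_le_sum (fun s _ => cliquePairTerm_nonneg hp0 hp1 j s) (mem_range.mpr (by omega))

end RpowBounds

section Assembly

variable {n : ℕ} {p : ℝ}

lemma neg_one_pow_mul_eulerChar_sub_cliqueCountR {k : ℕ} (hkn : k < n) (ω : Config n) :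
    (-1) ^ k * eulerChar n ω - cliqueCountR n k ω =
      ∑ j ∈ (range n).erase k, (-1) ^ (k + j) * cliqueCountR n j ω := by
  rw [eulerChar, mul_sum, ← add_sum_erase _ _ (mem_range.mpr hkn),
    ← mul_assoc, ← pow_add, Even.neg_one_pow ⟨k, rfl⟩, one_mul, add_sub_cancel_left]
  simp only [← mul_assoc, ← pow_add]

lemma staticVar_neg_one_pow_mul_eulerChar_sub_le (hp0 : 0 ≤ p) (hp1 : p ≤ 1) {k : ℕ}
    (hkn : k < n) {V r : ℝ} (hV : 0 ≤ V) (hr0 : 0 ≤ r) (hr1 : 2 * r < 1)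
    (h : ∀ j ≠ k, staticVar n p (cliqueCountR n j) ≤ V * (2 ^ (j + 1) * r ^ j.dist k) ^ 2) :
    staticVar n p (fun ω => (-1) ^ k * eulerChar n ω - cliqueCountR n k ω) ≤
      V * (2 ^ (k + 3) * r / (1 - 2 * r)) ^ 2 := by
  have hsqrt : ∀ j ≠ k,
      √(staticVar n p (cliqueCountR n j)) ≤ √V * (2 ^ (k + 1) * (2 * r) ^ j.dist k) := by
    intro j hj
    have h2 : (2 : ℝ) ^ (j + 1) ≤ 2 ^ (k + 1) * 2 ^ j.dist k := by
      rw [← pow_add]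
      exact pow_le_pow_right₀ one_le_two (by simp only [Nat.dist]; omega)
    calc √(staticVar n p (cliqueCountR n j)) ≤ √V * (2 ^ (j + 1) * r ^ j.dist k) :=
          Real.sqrt_le_iff.mpr ⟨by positivity, by rw [mul_pow, Real.sq_sqrt hV]; exact h j hj⟩
      _ ≤ √V * (2 ^ (k + 1) * 2 ^ j.dist k * r ^ j.dist k) := by gcongr
      _ = √V * (2 ^ (k + 1) * (2 * r) ^ j.dist k) := by rw [mul_pow, mul_assoc]
  have hsum : √(staticVar n p (fun ω => (-1) ^ k * eulerChar n ω - cliqueCountR n k ω)) ≤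
      √V * (2 ^ (k + 3) * r / (1 - 2 * r)) := by
    simp only [neg_one_pow_mul_eulerChar_sub_cliqueCountR hkn]
    calc _ ≤ ∑ j ∈ (range n).erase k,
          |(-1 : ℝ) ^ (k + j)| * √(staticVar n p (cliqueCountR n j)) :=
          sqrt_staticVar_sum_le hp0 hp1 _ _ _
      _ ≤ ∑ j ∈ (range n).erase k, √V * (2 ^ (k + 1) * (2 * r) ^ j.dist k) := by
          refine sum_le_sum fun j hj => ?_
          rw [abs_pow, abs_neg, abs_one, one_pow, one_mul]
          exact hsqrt j (ne_of_mem_erase hj)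
      _ ≤ √V * (2 ^ (k + 1) * (2 * (2 * r / (1 - 2 * r)))) := by
          rw [← mul_sum, ← mul_sum]
          gcongr
          exact sum_pow_dist_le (notMem_erase k _) (by positivity) hr1
      _ = √V * (2 ^ (k + 3) * r / (1 - 2 * r)) := by ring
  have hsq := (Real.sqrt_le_iff.mp hsum).2
  rwa [mul_pow, Real.sq_sqrt hV] at hsq

end Assembly

section Rates

variable {n : ℕ} {α : ℝ}

lemma staticVar_cliqueCountR_le_of_margin (hn : 0 < n) {k : ℕ} {D δ : ℝ}
    (hmargin : ∀ j t : ℕ, j ≠ k → 2 ≤ t → t ≤ j + 1 → covExponent α j t ≤ D - δ * j.dist k)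
    {j : ℕ} (hj : j ≠ k) :
    staticVar n ((n : ℝ) ^ α) (cliqueCountR n j) ≤
      (n : ℝ) ^ D * (2 ^ (j + 1) * ((n : ℝ) ^ (-(δ / 2))) ^ j.dist k) ^ 2 := by
  have hn' : (0 : ℝ) < n := by exact_mod_cast hn
  have hsplit : (n : ℝ) ^ (D - δ * j.dist k) =
      (n : ℝ) ^ D * (((n : ℝ) ^ (-(δ / 2))) ^ j.dist k) ^ 2 := by
    rw [← pow_mul, ← Real.rpow_natCast, ← Real.rpow_mul hn'.le, ← Real.rpow_add hn']
    push_cast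
    ring_nf
  calc _ ≤ 4 ^ (j + 1) * (n : ℝ) ^ (D - δ * j.dist k) :=
        staticVar_cliqueCountR_le_rpow hn j fun t ht2 htj => hmargin j t hj ht2 htj
    _ = _ := by
        rw [hsplit, show (4 : ℝ) ^ (j + 1) = (2 ^ (j + 1)) ^ 2 by
          rw [← pow_mul, mul_comm, pow_mul]; norm_num]
        ring

lemma one_sub_mul_rpow_max_covExponent_le_staticVar {k : ℕ} (hk : 1 ≤ k) (hn : 3 * (k + 1) ≤ n)
    (hα : α ≤ 0) :
    (1 - (n : ℝ) ^ α) * (n : ℝ) ^ max (covExponent α k 2) (covExponent α k (k + 1)) ≤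
      8 ^ (k + 1) * ((k + 1)! : ℝ) ^ 2 * staticVar n ((n : ℝ) ^ α) (cliqueCountR n k) := by
  rcases max_choice (covExponent α k 2) (covExponent α k (k + 1)) with h | h <;> rw [h]
  · exact_mod_cast one_sub_mul_rpow_le_staticVar hn hα (t := 2) le_rfl (by omega)
  · exact_mod_cast one_sub_mul_rpow_le_staticVar hn hα (t := k + 1) (by omega) le_rfl

lemma staticVar_neg_one_pow_mul_eulerChar_sub_div_le {k n : ℕ} (hk : 1 ≤ k) {α δ : ℝ} (hα : α ≤ 0)
    (hmargin : ∀ j t : ℕ, j ≠ k → 2 ≤ t → t ≤ j + 1 →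
      covExponent α j t ≤ max (covExponent α k 2) (covExponent α k (k + 1)) - δ * j.dist k)
    (hn : 3 * (k + 1) ≤ n) (hp : (n : ℝ) ^ α < 1) (hr : 2 * (n : ℝ) ^ (-(δ / 2)) < 1) :
    staticVar n ((n : ℝ) ^ α) (fun ω => (-1) ^ k * eulerChar n ω - cliqueCountR n k ω) /
        staticVar n ((n : ℝ) ^ α) (cliqueCountR n k) ≤
      8 ^ (k + 1) * ((k + 1)! : ℝ) ^ 2 *
        (2 ^ (k + 3) * (n : ℝ) ^ (-(δ / 2)) / (1 - 2 * (n : ℝ) ^ (-(δ / 2)))) ^ 2 /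
          (1 - (n : ℝ) ^ α) := by
  have hn0 : 0 < n := by omega
  set D := max (covExponent α k 2) (covExponent α k (k + 1))
  have hV : 0 < (n : ℝ) ^ D := Real.rpow_pos_of_pos (Nat.cast_pos.mpr hn0) D
  have hupper := staticVar_neg_one_pow_mul_eulerChar_sub_le (Real.rpow_nonneg n.cast_nonneg α)
    hp.le (by omega) hV.le (Real.rpow_nonneg n.cast_nonneg _) hr
    fun j hj => staticVar_cliqueCountR_le_of_margin hn0 hmargin hj
  have hlower : (1 - (n : ℝ) ^ α) * (n : ℝ) ^ D / (8 ^ (k + 1) * ((k + 1)! : ℝ) ^ 2) ≤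
      staticVar n ((n : ℝ) ^ α) (cliqueCountR n k) :=
    (div_le_iff₀' (by positivity)).mpr (one_sub_mul_rpow_max_covExponent_le_staticVar hk hn hα)
  have hp' : 0 < 1 - (n : ℝ) ^ α := sub_pos.mpr hp
  calc _ ≤ _ / ((1 - (n : ℝ) ^ α) * (n : ℝ) ^ D / (8 ^ (k + 1) * ((k + 1)! : ℝ) ^ 2)) :=
        div_le_div₀ (by positivity) hupper (by positivity) hlower
    _ = _ := by field_simp

end Rates

/-- `Var[(-1)^k χ_n - f_{n,k}] / Var[f_{n,k}] → 0` as
`n → ∞` when `p = n^α` with `α ∈ (-1/k, -1/(k+1))`. -/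
theorem variance_euler_minus_cliqueCount_ratio_tendsto_zero (k : ℕ) (hk : 1 ≤ k)
    (α : ℝ) (hα : α ∈ Set.Ioo (-(1 / (k : ℝ))) (-(1 / ((k : ℝ) + 1)))) :
    Filter.Tendsto
      (fun n : ℕ =>
        staticVar n ((n : ℝ) ^ α)
            (fun ω => (-1 : ℝ) ^ k * eulerChar n ω - cliqueCountR n k ω) /
          staticVar n ((n : ℝ) ^ α) (cliqueCountR n k))
      Filter.atTop (nhds 0) := by
  have hα0 : α < 0 := hα.2.trans (neg_neg_of_pos (by positivity))
  obtain ⟨δ, hδ, hmargin⟩ := exists_covExponent_margin hk hα.1 hα.2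
  have hr : Tendsto (fun n : ℕ => (n : ℝ) ^ (-(δ / 2))) atTop (nhds 0) :=
    (tendsto_rpow_neg_atTop (by linarith)).comp tendsto_natCast_atTop_atTop
  have hp : Tendsto (fun n : ℕ => (n : ℝ) ^ α) atTop (nhds 0) := by
    simpa [Function.comp_def] using
      (tendsto_rpow_neg_atTop (neg_pos.mpr hα0)).comp tendsto_natCast_atTop_atTop
  have hbound : Tendsto (fun n : ℕ => 8 ^ (k + 1) * ((k + 1)! : ℝ) ^ 2 *
      (2 ^ (k + 3) * (n : ℝ) ^ (-(δ / 2)) / (1 - 2 * (n : ℝ) ^ (-(δ / 2)))) ^ 2 /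
        (1 - (n : ℝ) ^ α)) atTop (nhds 0) := by
    simpa [Pi.div_def] using (((hr.const_mul (2 ^ (k + 3))).div ((hr.const_mul 2).const_sub 1)
      (by simp)).pow 2 |>.const_mul (8 ^ (k + 1) * ((k + 1)! : ℝ) ^ 2)).div (hp.const_sub 1)
      (by simp)
  refine squeeze_zero' ?_ ?_ hbound
  · filter_upwards [eventually_ge_atTop 1] with n hn
    have hp0 := Real.rpow_nonneg (Nat.cast_nonneg n) α
    have hp1 := Real.rpow_le_one_of_one_le_of_nonpos (Nat.one_le_cast.mpr hn) hα0.le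
    exact div_nonneg (staticVar_nonneg hp0 hp1 _) (staticVar_nonneg hp0 hp1 _)
  filter_upwards [eventually_ge_atTop (3 * (k + 1)), hp.eventually_lt_const one_pos,
    (hr.const_mul 2).eventually_lt_const (by norm_num : (2 : ℝ) * 0 < 1)] with n hn hp1 hr1
  exact staticVar_neg_one_pow_mul_eulerChar_sub_div_le hk hα0.le hmargin hn hp1 hr1

end
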